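/- arXiv:1105.1894 — 2 statements merged into one kernel-verified Lean document; each statement's English description precedes it below -/
import Mathlib

section
/- Let F be a finite field and E an extension field of F, let n be a positive integer, α ∈ E of multiplicative order exactly n, and b an integer. Let h, f ∈ F[X] with f(0) ≠ 0, and let a_j ∈ F be the j-th coefficient of the formal power series h/f ∈ F[[X]]. Let e ∈ F[X] with deg e < n have support set 𝓔, and let μ ≥ 2. Define S(X) = Σ_{j=0}^{μ−2} a_j e(α^{b+j}) X^j ∈ E[X], Λ(X) = ∏_{i∈𝓔} f(α^i X) ∈ E[X], and Ω(X) = Σ_{i∈𝓔} e_i α^{i b} h(α^i X) ∏_{j∈𝓔, j≠i} f(α^j X) ∈ E[X]. Then X^{μ−1} divides Λ(X)·S(X) − Ω(X) in E[X]. -/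
open Polynomial

/-- The polynomial `f(γ·X)`: map the coefficients along `φ` and substitute `γ·X` for `X`. -/
noncomputable def polySubst {F E : Type*} [CommRing F] [CommRing E]
    (φ : F →+* E) (f : Polynomial F) (γ : E) : Polynomial E :=
  (f.map φ).comp (Polynomial.C γ * Polynomial.X)

/-!
Over `E⟦X⟧` let `A = ∑ aⱼ Xʲ`, so that `A·f = h`, and put `T = ∑_{i ∈ 𝓔} eᵢ α^{ib} A(αⁱX)`.
Rescaling `A·f = h` by `αⁱ` gives `A(αⁱX)·f(αⁱX) = h(αⁱX)`, hence `Λ·T = Ω` exactly.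
The `j`-th coefficient of `T` is `aⱼ ∑ᵢ eᵢ α^{i(b+j)} = aⱼ e(α^{b+j})`, so `S` is the truncation
of `T` below degree `μ - 1`, and `Λ·S - Ω = Λ·(S - T)` is divisible by `X^{μ-1}`.
-/

open scoped PowerSeries

section polySubst

variable {R S : Type*} [CommRing R] [CommRing S] (φ : R →+* S)

theorem coe_polySubst (p : R[X]) (γ : S) :
    (polySubst φ p γ : S⟦X⟧) = PowerSeries.rescale γ (PowerSeries.map φ p) := by
  ext k
  rw [coeff_coe, polySubst, comp_C_mul_X_coeff, PowerSeries.coeff_rescale, ← polynomial_map_coe,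
    coeff_coe, coeff_map, mul_comm]

theorem rescale_map_mul_polySubst {A : R⟦X⟧} {f h : R[X]} (hA : A * f = h) (γ : S) :
    PowerSeries.rescale γ (PowerSeries.map φ A) * polySubst φ f γ = polySubst φ h γ := by
  rw [coe_polySubst, coe_polySubst, ← map_mul, ← map_mul, hA]

end polySubst

theorem Finset.prod_mul_sum_eq_sum_mul_prod_erase {ι R : Type*} [CommSemiring R] [DecidableEq ι]
    {s : Finset ι} {f g A : ι → R} (c : ι → R) (hA : ∀ i ∈ s, A i * f i = g i) :
    (∏ i ∈ s, f i) * ∑ i ∈ s, c i * A i = ∑ i ∈ s, c i * g i * ∏ j ∈ s.erase i, f j := by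
  rw [Finset.mul_sum]
  refine Finset.sum_congr rfl fun i hi => ?_
  rw [← Finset.mul_prod_erase s f hi, ← hA i hi]
  ring

theorem Polynomial.coeff_sum_range_C_mul_X_pow {R : Type*} [Semiring R] (c : ℕ → R)
    {m d : ℕ} (hd : d < m) :
    (∑ j ∈ Finset.range m, C (c j) * X ^ j).coeff d = c d := by
  simp [hd]

theorem Polynomial.X_pow_dvd_iff_coe {R : Type*} [Semiring R] {p : R[X]} {k : ℕ} :
    X ^ k ∣ p ↔ PowerSeries.X ^ k ∣ (p : R⟦X⟧) := by
  simp only [X_pow_dvd_iff, PowerSeries.X_pow_dvd_iff, coeff_coe]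

theorem PowerSeries.X_pow_dvd_coe_sub {R : Type*} [Ring R] {p : R[X]} {T : R⟦X⟧} {k : ℕ}
    (h : ∀ d < k, p.coeff d = coeff d T) : X ^ k ∣ (p : R⟦X⟧) - T := by
  rw [X_pow_dvd_iff]
  intro d hd
  rw [map_sub, Polynomial.coeff_coe, h d hd, sub_self]

theorem PowerSeries.coeff_sum_C_mul_rescale_zpow {F E : Type*} [CommSemiring F] [Field E]
    (φ : F →+* E) (p : F[X]) (A : E⟦X⟧) {α : E} (hα : α ≠ 0) (b : ℤ) (d : ℕ) :
    coeff d (∑ i ∈ p.support, C (φ (p.coeff i) * α ^ ((i : ℤ) * b)) * rescale (α ^ (i : ℤ)) A)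
      = coeff d A * (p.map φ).eval (α ^ (b + (d : ℤ))) := by
  rw [eval_map, eval₂_eq_sum, Polynomial.sum_def, map_sum, Finset.mul_sum]
  refine Finset.sum_congr rfl fun i _ => ?_
  have hpow : (α ^ (b + (d : ℤ))) ^ i = α ^ ((i : ℤ) * b) * (α ^ (i : ℤ)) ^ d := by
    rw [← zpow_natCast, ← zpow_natCast (α ^ (i : ℤ)), ← zpow_mul, ← zpow_mul, ← zpow_add₀ hα]
    ring_nf
  rw [coeff_C_mul, coeff_rescale, hpow]
  ring

theorem generalized_key_equation_general
    (F E : Type*) [Field F] [Field E] [Algebra F E]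
    (n : ℕ) (hn : 0 < n) (α : E) (hα : orderOf α = n) (b : ℤ)
    (h f : Polynomial F)
    (a : ℕ → F)
    (ha : (PowerSeries.mk a) * (f : PowerSeries F) = (h : PowerSeries F))
    (e : Polynomial F)
    (μ : ℕ)
    (S Λ Ω : Polynomial E)
    (hS : S = ∑ j ∈ Finset.range (μ - 1),
      Polynomial.C (algebraMap F E (a j) *
        (e.map (algebraMap F E)).eval (α ^ (b + (j : ℤ)))) * Polynomial.X ^ j)
    (hΛ : Λ = ∏ i ∈ e.support, polySubst (algebraMap F E) f (α ^ (i : ℤ)))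
    (hΩ : Ω = ∑ i ∈ e.support,
      Polynomial.C (algebraMap F E (e.coeff i) * α ^ ((i : ℤ) * b)) *
        polySubst (algebraMap F E) h (α ^ (i : ℤ)) *
        ∏ j ∈ e.support.erase i, polySubst (algebraMap F E) f (α ^ (j : ℤ))) :
    (Polynomial.X : Polynomial E) ^ (μ - 1) ∣ Λ * S - Ω := by
  have hα0 : α ≠ 0 := (orderOf_pos_iff.mp (hα ▸ hn)).isUnit.ne_zero
  set A := PowerSeries.map (algebraMap F E) (PowerSeries.mk a)
  set T := ∑ i ∈ e.support, PowerSeries.C (algebraMap F E (e.coeff i) * α ^ ((i : ℤ) * b)) *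
    PowerSeries.rescale (α ^ (i : ℤ)) A
  have hΛT : (Λ : E⟦X⟧) * T = Ω := by
    simp only [hΛ, hΩ, ← coeToPowerSeries.ringHom_apply, map_prod, map_sum, map_mul, T]
    simp only [coeToPowerSeries.ringHom_apply, coe_C]
    exact Finset.prod_mul_sum_eq_sum_mul_prod_erase _
      fun i _ => rescale_map_mul_polySubst _ ha _
  have hST : PowerSeries.X ^ (μ - 1) ∣ (S : E⟦X⟧) - T :=
    PowerSeries.X_pow_dvd_coe_sub fun d hd => by
      rw [hS, coeff_sum_range_C_mul_X_pow _ hd, PowerSeries.coeff_sum_C_mul_rescale_zpow _ _ _ hα0]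
      rw [PowerSeries.coeff_map, PowerSeries.coeff_mk]
  rw [X_pow_dvd_iff_coe, coe_sub, coe_mul, ← hΛT, ← mul_sub]
  exact hST.mul_left _

/-- The generalized key equation (equation (19)):
`Λ(X)·S(X) ≡ Ω(X) mod X^{μ−1}`. -/
theorem generalized_key_equation
    (F E : Type*) [Field F] [Fintype F] [Field E] [Algebra F E]
    (n : ℕ) (hn : 0 < n) (α : E) (hα : orderOf α = n) (b : ℤ)
    (h f : Polynomial F) (hf0 : f.coeff 0 ≠ 0)
    (a : ℕ → F)
    (ha : (PowerSeries.mk a) * (f : PowerSeries F) = (h : PowerSeries F))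
    (e : Polynomial F) (hedeg : e.natDegree < n)
    (μ : ℕ) (hμ : 2 ≤ μ)
    (S Λ Ω : Polynomial E)
    (hS : S = ∑ j ∈ Finset.range (μ - 1),
      Polynomial.C (algebraMap F E (a j) *
        (e.map (algebraMap F E)).eval (α ^ (b + (j : ℤ)))) * Polynomial.X ^ j)
    (hΛ : Λ = ∏ i ∈ e.support, polySubst (algebraMap F E) f (α ^ (i : ℤ)))
    (hΩ : Ω = ∑ i ∈ e.support,
      Polynomial.C (algebraMap F E (e.coeff i) * α ^ ((i : ℤ) * b)) *
        polySubst (algebraMap F E) h (α ^ (i : ℤ)) *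
        ∏ j ∈ e.support.erase i, polySubst (algebraMap F E) f (α ^ (j : ℤ))) :
    (Polynomial.X : Polynomial E) ^ (μ - 1) ∣ Λ * S - Ω :=
  generalized_key_equation_general F E n hn α hα b h f a ha e μ S Λ Ω hS hΛ hΩ
end

section
/- (Boston's bound 6 via rational functions.) Let F be a finite field and E an extension field of F, let n be an odd positive integer, and let α ∈ E have multiplicative order exactly n. If c ∈ F[X] is nonzero with deg c < n and c(α^i) = 0 for all i ∈ {0, 1, 2, 4, 5, 6, 8}, then the Hamming weight of c is at least 6. -/
/-!
Write `c(α^i) = ∑ⱼ aⱼ βⱼ^i` with `βⱼ = α^j` over the support of `c`. If the weight `w` is at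
most `5`, a Vandermonde argument on the first `w` power sums forces the power sum of index `3`
to be nonzero and `w ≥ 4`. Every `βⱼ` is a root of the monic quintic `Q = X^(5-w) ∏ⱼ (X - βⱼ)`,
so the power sums satisfy the linear recurrence with characteristic polynomial `Q`; the
prescribed zeros turn this recurrence into `Q = (X - u)(X⁴ - v)`. Since `n` is odd, both
`j ↦ α^j` and `j ↦ α^(4j)` are injective on the support, so at most one `βⱼ` equals `u` and at
most one has `βⱼ⁴ = v`: `w ≤ 2`.
-/

open Polynomial Finset

theorem Finset.card_le_two_of_forall_eq_or_eq {ι κ ν : Type*} {S : Finset ι} {f : ι → κ}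
    {g : ι → ν} {u : κ} {v : ν} (hf : Set.InjOn f S) (hg : Set.InjOn g S)
    (h : ∀ j ∈ S, f j = u ∨ g j = v) : S.card ≤ 2 := by
  classical
  have hS : S ⊆ S.filter (f · = u) ∪ S.filter (g · = v) := fun j hj => by
    simpa [hj] using h j hj
  have hfu : (S.filter (f · = u)).card ≤ 1 := card_le_one.mpr fun x hx y hy => by
    rw [mem_filter] at hx hy
    exact hf hx.1 hy.1 (hx.2.trans hy.2.symm)
  have hgv : (S.filter (g · = v)).card ≤ 1 := card_le_one.mpr fun x hx y hy => by
    rw [mem_filter] at hx hy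
    exact hg hx.1 hy.1 (hx.2.trans hy.2.symm)
  calc S.card ≤ (S.filter (f · = u) ∪ S.filter (g · = v)).card := card_le_card hS
    _ ≤ 2 := (card_union_le _ _).trans (by omega)

theorem injOn_pow_pow_Iio_orderOf {M : Type*} [Monoid M] {x : M} {m : ℕ}
    (h : (orderOf x).Coprime m) : (Set.Iio (orderOf x)).InjOn fun j => (x ^ j) ^ m := by
  intro i hi j hj hij
  rw [Set.mem_Iio, ← h.orderOf_pow] at hi hj
  refine pow_injOn_Iio_orderOf hi hj ?_
  simpa only [← pow_mul, mul_comm m] using hij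

section WeightedPowerSum

variable {ι K : Type*} [Field K] (S : Finset ι) (a β : ι → K)

def weightedPowerSum (i : ℕ) : K :=
  ∑ j ∈ S, a j * β j ^ i

theorem eval_map_pow_eq_weightedPowerSum {R : Type*} [Semiring R] (φ : R →+* K) (c : R[X])
    (x : K) (i : ℕ) :
    (c.map φ).eval (x ^ i) = weightedPowerSum c.support (fun j => φ (c.coeff j)) (x ^ ·) i := by
  rw [eval_map, eval₂_eq_sum, Polynomial.sum_def, weightedPowerSum]
  simp_rw [← pow_mul, mul_comm i]

theorem sum_coeff_mul_weightedPowerSum_add (Q : K[X]) (k : ℕ) :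
    ∑ l ∈ range (Q.natDegree + 1), Q.coeff l * weightedPowerSum S a β (k + l) =
      ∑ j ∈ S, a j * β j ^ k * Q.eval (β j) := by
  simp_rw [weightedPowerSum, mul_sum, eval_eq_sum_range, mul_sum]
  rw [sum_comm]
  refine sum_congr rfl fun j _ => sum_congr rfl fun l _ => ?_
  ring

theorem exists_lt_card_weightedPowerSum_ne_zero {j₀ : ι} (hj₀ : j₀ ∈ S) (ha : a j₀ ≠ 0)
    (hβ : Set.InjOn β S) : ∃ l < S.card, weightedPowerSum S a β l ≠ 0 := by
  by_contra! h
  let e : Fin S.card ≃ S := S.equivFin.symm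
  have hinj : Function.Injective (β ∘ (↑) ∘ e) := fun x y hxy =>
    e.injective (Subtype.ext (hβ (e x).2 (e y).2 hxy))
  have hzero := Matrix.eq_zero_of_forall_pow_sum_mul_pow_eq_zero (v := a ∘ (↑) ∘ e) hinj
    fun i => by
      rw [← h i i.2, weightedPowerSum, ← sum_coe_sort S]
      exact e.sum_comp fun j : S => a j * β j ^ (i : ℕ)
  exact ha (by simpa [e] using congrFun hzero (e.symm ⟨j₀, hj₀⟩))

theorem exists_forall_eq_or_pow_four_eq (hcard : S.card ≤ 5)
    (hzero : ∀ i ∈ ({0, 1, 2, 4, 5, 6, 8} : Finset ℕ), weightedPowerSum S a β i = 0)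
    (h₃ : weightedPowerSum S a β 3 ≠ 0) : ∃ u v : K, ∀ j ∈ S, β j = u ∨ β j ^ 4 = v := by
  set p := weightedPowerSum S a β
  set Q : K[X] := X ^ (5 - S.card) * ∏ j ∈ S, (X - C (β j))
  have hprod : (∏ j ∈ S, (X - C (β j))).Monic :=
    monic_prod_of_monic _ _ fun j _ => monic_X_sub_C _
  have hmonic : Q.Monic := (monic_X_pow _).mul hprod
  have hdeg : Q.natDegree = 5 := by
    rw [natDegree_mul (pow_ne_zero _ X_ne_zero) hprod.ne_zero, natDegree_X_pow,
      natDegree_prod_of_monic _ _ fun j _ => monic_X_sub_C _]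
    simp only [natDegree_X_sub_C, sum_const, smul_eq_mul, mul_one]
    omega
  have hroot : ∀ j ∈ S, Q.eval (β j) = 0 := fun j hj => by
    rw [eval_mul, eval_prod, prod_eq_zero hj (by simp), mul_zero]
  have hrec : ∀ k, ∑ l ∈ range 6, Q.coeff l * p (k + l) = 0 := fun k => by
    rw [show 6 = Q.natDegree + 1 by omega, sum_coeff_mul_weightedPowerSum_add]
    exact sum_eq_zero fun j hj => by rw [hroot j hj, mul_zero]
  have h₅ : Q.coeff 5 = 1 := hdeg ▸ hmonic.coeff_natDegree
  have r₀ := hrec 0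
  have r₁ := hrec 1
  have r₂ := hrec 2
  have r₃ := hrec 3
  simp only [sum_range_succ, sum_range_zero, Nat.reduceAdd, h₅, hzero 0 (by decide),
    hzero 1 (by decide), hzero 2 (by decide), hzero 4 (by decide), hzero 5 (by decide),
    hzero 6 (by decide), hzero 8 (by decide), mul_zero, zero_add, add_zero, one_mul]
    at r₀ r₁ r₂ r₃
  have hq₃ : Q.coeff 3 = 0 := (mul_eq_zero.mp r₀).resolve_right h₃
  have hq₂ : Q.coeff 2 = 0 := (mul_eq_zero.mp r₁).resolve_right h₃
  -- `r₂` expresses `p 7` through `p 3`; substituting it into `r₃` leaves a multiple of `p 3`.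
  have hq₀ : Q.coeff 0 = Q.coeff 4 * Q.coeff 1 := by
    have : (Q.coeff 0 - Q.coeff 4 * Q.coeff 1) * p 3 = 0 := by
      linear_combination r₃ - Q.coeff 4 * r₂
    exact sub_eq_zero.mp ((mul_eq_zero.mp this).resolve_right h₃)
  refine ⟨-Q.coeff 4, -Q.coeff 1, fun j hj => ?_⟩
  have hfactor : (β j + Q.coeff 4) * (β j ^ 4 + Q.coeff 1) = 0 := by
    have h := hroot j hj
    rw [eval_eq_sum_range, hdeg] at h
    simp only [sum_range_succ, sum_range_zero, hq₂, hq₃, h₅, hq₀] at h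
    linear_combination h
  rcases mul_eq_zero.mp hfactor with h | h
  · exact Or.inl (eq_neg_of_add_eq_zero_left h)
  · exact Or.inr (eq_neg_of_add_eq_zero_left h)

end WeightedPowerSum

theorem boston_bound_six_general
    (F E : Type*) [Field F] [Field E] [Algebra F E]
    (n : ℕ) (hodd : Odd n)
    (α : E) (hα : orderOf α = n)
    (c : Polynomial F) (hc : c ≠ 0) (hcdeg : c.natDegree < n)
    (hzero : ∀ i ∈ ({0, 1, 2, 4, 5, 6, 8} : Finset ℕ),
      (c.map (algebraMap F E)).eval (α ^ i) = 0) :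
    6 ≤ c.support.card := by
  by_contra! hcard
  set S := c.support
  set a : ℕ → E := fun j => algebraMap F E (c.coeff j)
  have hp : ∀ i ∈ ({0, 1, 2, 4, 5, 6, 8} : Finset ℕ), weightedPowerSum S a (α ^ ·) i = 0 :=
    fun i hi => eval_map_pow_eq_weightedPowerSum _ c α i ▸ hzero i hi
  have hS : (S : Set ℕ) ⊆ Set.Iio (orderOf α) := fun j hj =>
    hα ▸ (le_natDegree_of_mem_supp j hj).trans_lt hcdeg
  have hinj : Set.InjOn (α ^ ·) S := pow_injOn_Iio_orderOf.mono hS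
  have hinj₄ : Set.InjOn (fun j => (α ^ j) ^ 4) S := (injOn_pow_pow_Iio_orderOf
    (hα ▸ Nat.Coprime.pow_right 2 (Nat.coprime_two_right.mpr hodd))).mono hS
  obtain ⟨j₀, hj₀⟩ := support_nonempty.mpr hc
  obtain ⟨l, hl, hpl⟩ := exists_lt_card_weightedPowerSum_ne_zero S a _ hj₀
    (by simpa [a] using mem_support_iff.mp hj₀) hinj
  have hl₃ : l = 3 := by
    have : l < 6 := hl.trans hcard
    interval_cases l <;> first | rfl | exact absurd (hp _ (by decide)) hpl
  obtain ⟨u, v, huv⟩ := exists_forall_eq_or_pow_four_eq S a _ (by omega) hp (hl₃ ▸ hpl)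
  have hle := Finset.card_le_two_of_forall_eq_or_eq hinj hinj₄ huv
  omega

/-- Boston's bound 6 via rational functions: if `n` is odd and the codeword
`c` vanishes at `α^i` for `i ∈ {0, 1, 2, 4, 5, 6, 8}`, then `wt(c) ≥ 6`. -/
theorem boston_bound_six
    (F E : Type*) [Field F] [Fintype F] [Field E] [Algebra F E]
    (n : ℕ) (hn : 0 < n) (hodd : Odd n)
    (α : E) (hα : orderOf α = n)
    (c : Polynomial F) (hc : c ≠ 0) (hcdeg : c.natDegree < n)
    (hzero : ∀ i ∈ ({0, 1, 2, 4, 5, 6, 8} : Finset ℕ),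
      (c.map (algebraMap F E)).eval (α ^ i) = 0) :
    6 ≤ c.support.card :=
  boston_bound_six_general F E n hodd α hα c hc hcdeg hzero
end
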